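/- arXiv:1209.0475 — 3 statements merged into one kernel-verified Lean document; each statement's English description precedes it below -/
import Mathlib

section
/- Let p be an odd prime and d > 3p². For integers a, b, m, n, define min(a,b) as the minimum of the four quantities a² + ab + db², (a-p)² + (a-p)b + db², a² + a(b-p) + d(b-p)², (a-p)² + (a-p)(b-p) + d(b-p)², where 0 ≤ a, b, m, n < p. If min(a,b) = min(m,n), then (m,n) is congruent modulo p to one of (a,b), (-a-b,b), (-a,-b), (a+b,-b). -/
/-!
Both sides of the hypothesis are values of the norm form `x² + xy + dy²` at lifts of the residue
classes with coordinates in `[-p, p]`. Writing `4(x² + xy + dy²) = (2x + y)² + (4d - 1)y²` with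
`(2x + y)² ≤ 9p² < 4d - 1`, such a value determines `y²` and `(2x + y)²`, hence determines `(x, y)`
up to the four automorphisms `(x, y) ↦ ±(x, y)`, `(x, y) ↦ ±(-x - y, y)` of the form.
-/

def normForm (d x y : ℤ) : ℤ := x ^ 2 + x * y + d * y ^ 2

def thetaMin (p d a b : ℤ) : ℤ :=
  min (min (normForm d a b) (normForm d (a - p) b))
    (min (normForm d a (b - p)) (normForm d (a - p) (b - p)))

lemma exists_eq_min_min {α β γ : Type*} [LinearOrder γ] (f : α → β → γ) (a a' : α) (b b' : β) :
    ∃ x ∈ ({a, a'} : Set α), ∃ y ∈ ({b, b'} : Set β),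
      f x y = min (min (f a b) (f a' b)) (min (f a b') (f a' b')) := by
  rcases min_choice (min (f a b) (f a' b)) (min (f a b') (f a' b')) with h | h <;> rw [h]
  · rcases min_choice (f a b) (f a' b) with h' | h' <;> rw [h']
    exacts [⟨a, by simp, b, by simp, rfl⟩, ⟨a', by simp, b, by simp, rfl⟩]
  · rcases min_choice (f a b') (f a' b') with h' | h' <;> rw [h']
    exacts [⟨a, by simp, b', by simp, rfl⟩, ⟨a', by simp, b', by simp, rfl⟩]

lemma modEq_and_abs_le_of_mem_pair {p c z : ℤ} (hc : 0 ≤ c) (hcp : c < p)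
    (hz : z ∈ ({c, c - p} : Set ℤ)) : z ≡ c [ZMOD p] ∧ |z| ≤ p := by
  rcases hz with rfl | rfl
  · exact ⟨rfl, by rw [abs_le]; constructor <;> linarith⟩
  · exact ⟨Int.modEq_iff_dvd.mpr ⟨1, by ring⟩, by rw [abs_le]; constructor <;> linarith⟩

lemma exists_modEq_normForm_eq_thetaMin {p a b : ℤ} (d : ℤ) (ha : 0 ≤ a) (ha' : a < p)
    (hb : 0 ≤ b) (hb' : b < p) :
    ∃ x y, x ≡ a [ZMOD p] ∧ y ≡ b [ZMOD p] ∧ |x| ≤ p ∧ |y| ≤ p ∧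
      normForm d x y = thetaMin p d a b := by
  obtain ⟨x, hx, y, hy, hxy⟩ := exists_eq_min_min (normForm d) a (a - p) b (b - p)
  obtain ⟨hxa, hxp⟩ := modEq_and_abs_le_of_mem_pair ha ha' hx
  obtain ⟨hyb, hyp⟩ := modEq_and_abs_le_of_mem_pair hb hb' hy
  exact ⟨x, y, hxa, hyb, hxp, hyp, hxy⟩

lemma sq_eq_sq_of_sq_add_mul_sq_eq {D s t y v : ℤ} (hs : s ^ 2 < D) (ht : t ^ 2 < D)
    (h : s ^ 2 + D * y ^ 2 = t ^ 2 + D * v ^ 2) : y ^ 2 = v ^ 2 := by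
  rcases lt_trichotomy (y ^ 2) (v ^ 2) with hlt | heq | hgt
  · nlinarith [sq_nonneg s]
  · exact heq
  · nlinarith [sq_nonneg t]

lemma eq_automorph_of_normForm_eq {p d x y u v : ℤ} (hd : 3 * p ^ 2 < d)
    (hx : |x| ≤ p) (hy : |y| ≤ p) (hu : |u| ≤ p) (hv : |v| ≤ p)
    (h : normForm d x y = normForm d u v) :
    (u = x ∧ v = y) ∨ (u = -x - y ∧ v = y) ∨ (u = -x ∧ v = -y) ∨ (u = x + y ∧ v = -y) := by
  have bound : ∀ s t : ℤ, |s| ≤ p → |t| ≤ p → (2 * s + t) ^ 2 < 4 * d - 1 := by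
    intro s t hs ht
    rw [abs_le] at hs ht
    nlinarith
  have hyv : y ^ 2 = v ^ 2 :=
    sq_eq_sq_of_sq_add_mul_sq_eq (bound x y hx hy) (bound u v hu hv)
      (by unfold normForm at h; linear_combination 4 * h)
  have hxu : (2 * x + y) ^ 2 = (2 * u + v) ^ 2 := by
    unfold normForm at h; linear_combination 4 * h - (4 * d - 1) * hyv
  rcases sq_eq_sq_iff_eq_or_eq_neg.mp hyv with hv' | hv' <;>
    rcases sq_eq_sq_iff_eq_or_eq_neg.mp hxu with hu' | hu'
  · left; constructor <;> linarith
  · right; left; constructor <;> linarith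
  · right; right; right; constructor <;> linarith
  · right; right; left; constructor <;> linarith

theorem stmt_14_general (p : ℕ) (d : ℤ) (hd : 3 * (p : ℤ) ^ 2 < d)
    (a b m n : ℤ)
    (ha : 0 ≤ a) (ha' : a < p) (hb : 0 ≤ b) (hb' : b < p)
    (hm : 0 ≤ m) (hm' : m < p) (hn : 0 ≤ n) (hn' : n < p)
    (h : min (min (a ^ 2 + a * b + d * b ^ 2)
                ((a - p) ^ 2 + (a - p) * b + d * b ^ 2))
             (min (a ^ 2 + a * (b - p) + d * (b - p) ^ 2)
                ((a - p) ^ 2 + (a - p) * (b - p) + d * (b - p) ^ 2)) =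
         min (min (m ^ 2 + m * n + d * n ^ 2)
                ((m - p) ^ 2 + (m - p) * n + d * n ^ 2))
             (min (m ^ 2 + m * (n - p) + d * (n - p) ^ 2)
                ((m - p) ^ 2 + (m - p) * (n - p) + d * (n - p) ^ 2))) :
    (m ≡ a [ZMOD (p : ℤ)] ∧ n ≡ b [ZMOD (p : ℤ)]) ∨
    (m ≡ -a - b [ZMOD (p : ℤ)] ∧ n ≡ b [ZMOD (p : ℤ)]) ∨
    (m ≡ -a [ZMOD (p : ℤ)] ∧ n ≡ -b [ZMOD (p : ℤ)]) ∨
    (m ≡ a + b [ZMOD (p : ℤ)] ∧ n ≡ -b [ZMOD (p : ℤ)]) := by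
  obtain ⟨x, y, hxa, hyb, hx, hy, hxy⟩ := exists_modEq_normForm_eq_thetaMin d ha ha' hb hb'
  obtain ⟨u, v, hum, hvn, hu, hv, huv⟩ := exists_modEq_normForm_eq_thetaMin d hm hm' hn hn'
  have hmin : thetaMin p d a b = thetaMin p d m n := h
  rcases eq_automorph_of_normForm_eq hd hx hy hu hv (by rw [hxy, huv, hmin]) with
    ⟨rfl, rfl⟩ | ⟨rfl, rfl⟩ | ⟨rfl, rfl⟩ | ⟨rfl, rfl⟩
  · exact Or.inl ⟨hum.symm.trans hxa, hvn.symm.trans hyb⟩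
  · exact Or.inr <| Or.inl ⟨hum.symm.trans (hxa.neg.sub hyb), hvn.symm.trans hyb⟩
  · exact Or.inr <| Or.inr <| Or.inl ⟨hum.symm.trans hxa.neg, hvn.symm.trans hyb.neg⟩
  · exact Or.inr <| Or.inr <| Or.inr ⟨hum.symm.trans (hxa.add hyb), hvn.symm.trans hyb.neg⟩

theorem stmt_14 (p : ℕ) (hp : p.Prime) (hodd : Odd p) (d : ℤ) (hd : 3 * (p : ℤ) ^ 2 < d)
    (a b m n : ℤ)
    (ha : 0 ≤ a) (ha' : a < p) (hb : 0 ≤ b) (hb' : b < p)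
    (hm : 0 ≤ m) (hm' : m < p) (hn : 0 ≤ n) (hn' : n < p)
    (h : min (min (a ^ 2 + a * b + d * b ^ 2)
                ((a - p) ^ 2 + (a - p) * b + d * b ^ 2))
             (min (a ^ 2 + a * (b - p) + d * (b - p) ^ 2)
                ((a - p) ^ 2 + (a - p) * (b - p) + d * (b - p) ^ 2)) =
         min (min (m ^ 2 + m * n + d * n ^ 2)
                ((m - p) ^ 2 + (m - p) * n + d * n ^ 2))
             (min (m ^ 2 + m * (n - p) + d * (n - p) ^ 2)
                ((m - p) ^ 2 + (m - p) * (n - p) + d * (n - p) ^ 2))) :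
    (m ≡ a [ZMOD (p : ℤ)] ∧ n ≡ b [ZMOD (p : ℤ)]) ∨
    (m ≡ -a - b [ZMOD (p : ℤ)] ∧ n ≡ b [ZMOD (p : ℤ)]) ∨
    (m ≡ -a [ZMOD (p : ℤ)] ∧ n ≡ -b [ZMOD (p : ℤ)]) ∨
    (m ≡ a + b [ZMOD (p : ℤ)] ∧ n ≡ -b [ZMOD (p : ℤ)]) :=
  stmt_14_general p d hd a b m n ha ha' hb hb' hm hm' hn hn' h
end

section
/- Let p be an odd prime, 0 ≤ a, b < p, ℓ = 4d - 1 with d a positive integer. The minimum of Q_d(x, y) over all integers x ≡ a (mod p), y ≡ b (mod p) equals the minimum of the four values Q_d(a,b), Q_d(a-p,b), Q_d(a,b-p), Q_d(a-p,b-p), provided d > 3p² — in fact the minimum over x ∈ {a, a-p}, y ∈ {b, b-p} suffices when d > p²/4 (i.e., the minimizing x, y satisfy |x|, |y| ≤ p). -/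
/-!
Write `4 Q_d(x, y) = (2x + y)² + (4d - 1) y²`. If `y ∉ {b, b - p}`, then `|y| ≥ p` and
`4 Q_d(x, y) ≥ (4d - 1) p²`, while `p` odd lets us pick a corner `(u, v)` with `|2u|, |2v| ≤ p - 1`,
whose value is smaller as soon as `4d > p²`. If `y ∈ {b, b - p}`, then `|y| ≤ p` puts the vertex
`-y/2` of the parabola `x ↦ Q_d(x, y)` within `p/2` of `0`, so on the progression `x ≡ a (mod p)`
it is minimized at `a` or `a - p`.
-/

def quadForm (d x y : ℤ) : ℤ := x ^ 2 + x * y + d * y ^ 2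

lemma four_mul_quadForm (d x y : ℤ) :
    4 * quadForm d x y = (2 * x + y) ^ 2 + (4 * d - 1) * y ^ 2 := by
  unfold quadForm; ring

lemma Int.ModEq.eq_or_eq_sub_or_add_le_or_le_sub {p x a : ℤ} (hp : 0 ≤ p)
    (h : x ≡ a [ZMOD p]) : x = a ∨ x = a - p ∨ a + p ≤ x ∨ x ≤ a - 2 * p := by
  obtain ⟨k, hk⟩ := h.symm.dvd
  obtain hk | rfl | rfl | hk : 1 ≤ k ∨ k = 0 ∨ k = -1 ∨ k ≤ -2 := by omega
  · right; right; left; nlinarith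
  · left; linarith
  · right; left; linarith
  · right; right; right; nlinarith

lemma Int.ModEq.eq_or_eq_sub_or_le_abs {p y b : ℤ} (hb : 0 ≤ b) (hb' : b < p)
    (h : y ≡ b [ZMOD p]) : (y = b ∨ y = b - p) ∨ p ≤ |y| := by
  rcases h.eq_or_eq_sub_or_add_le_or_le_sub (by linarith) with h | h | h | h
  exacts [.inl (.inl h), .inl (.inr h), .inr (le_abs.mpr (by omega)), .inr (le_abs.mpr (by omega))]

lemma exists_quadForm_le_of_abs_le {d p a x y : ℤ} (ha : 0 ≤ a) (ha' : a < p) (hy : |y| ≤ p)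
    (hx : x ≡ a [ZMOD p]) : ∃ u, (u = a ∨ u = a - p) ∧ quadForm d u y ≤ quadForm d x y := by
  obtain ⟨hy, hy'⟩ := abs_le.mp hy
  unfold quadForm
  rcases hx.eq_or_eq_sub_or_add_le_or_le_sub (by linarith) with rfl | rfl | hx | hx
  · exact ⟨_, .inl rfl, le_rfl⟩
  · exact ⟨_, .inr rfl, le_rfl⟩
  · refine ⟨a, .inl rfl, ?_⟩
    nlinarith [mul_nonneg (show 0 ≤ x - a by linarith) (show 0 ≤ x + a + y by linarith)]
  · refine ⟨a - p, .inr rfl, ?_⟩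
    nlinarith [mul_nonneg (show 0 ≤ a - p - x by linarith) (show 0 ≤ p - a - x - y by linarith)]

lemma exists_abs_two_mul_le_of_odd {p a : ℤ} (hp : Odd p) (ha : 0 ≤ a) (ha' : a < p) :
    ∃ u, (u = a ∨ u = a - p) ∧ |2 * u| ≤ p - 1 := by
  obtain ⟨k, rfl⟩ := hp
  rcases le_or_gt a k with h | h
  · exact ⟨a, .inl rfl, abs_le.mpr ⟨by omega, by omega⟩⟩
  · exact ⟨_, .inr rfl, abs_le.mpr ⟨by omega, by omega⟩⟩

lemma four_mul_quadForm_le {d p u v : ℤ} (hd : p ^ 2 < 4 * d) (hu : |2 * u| ≤ p - 1)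
    (hv : |2 * v| ≤ p - 1) : 4 * quadForm d u v ≤ (4 * d - 1) * p ^ 2 := by
  have hp : 1 ≤ p := by linarith [abs_nonneg (2 * u)]
  have hd0 : 0 ≤ d := by nlinarith
  have huu : (2 * u) ^ 2 ≤ (p - 1) ^ 2 := sq_abs (2 * u) ▸ pow_le_pow_left₀ (abs_nonneg _) hu 2
  have hvv : (2 * v) ^ 2 ≤ (p - 1) ^ 2 := sq_abs (2 * v) ▸ pow_le_pow_left₀ (abs_nonneg _) hv 2
  have huv : 2 * u * (2 * v) ≤ (p - 1) ^ 2 :=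
    calc 2 * u * (2 * v) ≤ |2 * u| * |2 * v| := by rw [← abs_mul]; exact le_abs_self _
      _ ≤ (p - 1) * (p - 1) := mul_le_mul hu hv (abs_nonneg _) (by linarith)
      _ = (p - 1) ^ 2 := by ring
  calc 4 * quadForm d u v = (2 * u) ^ 2 + 2 * u * (2 * v) + d * (2 * v) ^ 2 := by
        unfold quadForm; ring
    _ ≤ (2 + d) * (p - 1) ^ 2 := by nlinarith
    _ ≤ (4 * d - 1) * p ^ 2 := by nlinarith

lemma mul_sq_le_four_mul_quadForm {d p x y : ℤ} (hd : 0 < d) (hp : 0 ≤ p) (hy : p ≤ |y|) :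
    (4 * d - 1) * p ^ 2 ≤ 4 * quadForm d x y := by
  have hyy : p ^ 2 ≤ y ^ 2 := sq_abs y ▸ pow_le_pow_left₀ hp hy 2
  rw [four_mul_quadForm]
  nlinarith [sq_nonneg (2 * x + y)]

lemma min_corners_le {d p a b u v : ℤ} (hu : u = a ∨ u = a - p) (hv : v = b ∨ v = b - p) :
    min (min (quadForm d a b) (quadForm d (a - p) b))
      (min (quadForm d a (b - p)) (quadForm d (a - p) (b - p))) ≤ quadForm d u v := by
  rcases hu with rfl | rfl <;> rcases hv with rfl | rfl <;> simp

theorem stmt_15_general (p : ℕ) (hodd : Odd p) (d : ℤ) (hd4 : (p : ℤ) ^ 2 < 4 * d)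
    (a b : ℤ) (ha : 0 ≤ a) (ha' : a < p) (hb : 0 ≤ b) (hb' : b < p) :
    IsLeast {N : ℤ | ∃ x y : ℤ, x ≡ a [ZMOD (p : ℤ)] ∧ y ≡ b [ZMOD (p : ℤ)] ∧
        N = x ^ 2 + x * y + d * y ^ 2}
      (min (min (a ^ 2 + a * b + d * b ^ 2)
              ((a - p) ^ 2 + (a - p) * b + d * b ^ 2))
           (min (a ^ 2 + a * (b - p) + d * (b - p) ^ 2)
              ((a - p) ^ 2 + (a - p) * (b - p) + d * (b - p) ^ 2))) := by
  have hp0 : (0 : ℤ) ≤ p := Int.natCast_nonneg p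
  have hsub {c : ℤ} : c - p ≡ c [ZMOD p] := Int.modEq_iff_dvd.mpr ⟨1, by ring⟩
  refine ⟨?_, ?_⟩
  · exact min_rec' (· ∈ _)
      (min_rec' (· ∈ _) ⟨a, b, .rfl, .rfl, rfl⟩ ⟨a - p, b, hsub, .rfl, rfl⟩)
      (min_rec' (· ∈ _) ⟨a, b - p, .rfl, hsub, rfl⟩ ⟨a - p, b - p, hsub, hsub, rfl⟩)
  · rintro _ ⟨x, y, hx, hy, rfl⟩
    rcases hy.eq_or_eq_sub_or_le_abs hb hb' with hnear | hfar
    · have hy : |y| ≤ p := abs_le.mpr (by omega)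
      obtain ⟨u, hu, hle⟩ := exists_quadForm_le_of_abs_le (d := d) ha ha' hy hx
      exact (min_corners_le hu hnear).trans hle
    · have hoddZ : Odd (p : ℤ) := hodd.natCast
      obtain ⟨u, hu, hu'⟩ := exists_abs_two_mul_le_of_odd hoddZ ha ha'
      obtain ⟨v, hv, hv'⟩ := exists_abs_two_mul_le_of_odd hoddZ hb hb'
      have hcorner := four_mul_quadForm_le hd4 hu' hv'
      have hxy := mul_sq_le_four_mul_quadForm (d := d) (x := x) (by nlinarith) hp0 hfar
      exact (min_corners_le hu hv).trans (show quadForm d u v ≤ quadForm d x y by linarith)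

theorem stmt_15 (p : ℕ) (hp : p.Prime) (hodd : Odd p) (d : ℤ) (hd4 : (p : ℤ) ^ 2 < 4 * d)
    (a b : ℤ) (ha : 0 ≤ a) (ha' : a < p) (hb : 0 ≤ b) (hb' : b < p) :
    IsLeast {N : ℤ | ∃ x y : ℤ, x ≡ a [ZMOD (p : ℤ)] ∧ y ≡ b [ZMOD (p : ℤ)] ∧
        N = x ^ 2 + x * y + d * y ^ 2}
      (min (min (a ^ 2 + a * b + d * b ^ 2)
              ((a - p) ^ 2 + (a - p) * b + d * b ^ 2))
           (min (a ^ 2 + a * (b - p) + d * (b - p) ^ 2)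
              ((a - p) ^ 2 + (a - p) * (b - p) + d * (b - p) ^ 2))) :=
  stmt_15_general p hodd d hd4 a b ha ha' hb hb'
end

section
/- Let C ⊆ R^n be a linear code over R = O_K/pO_K (n fixed), and for an admissible ℓ let Λ_ℓ(C) ⊆ O_K^n be the preimage of C under componentwise reduction mod p. Then Λ_ℓ(C) is an O_K-submodule of O_K^n containing (pO_K)^n, and the theta series θ_{Λ_ℓ(C)}(q) = Σ_{u ∈ Λ_ℓ(C)} q^{u·ū} satisfies: for admissible ℓ < ℓ', the coefficients of q^k in θ_{Λ_ℓ(C)} and θ_{Λ_{ℓ'}(C)} agree for all k < (ℓ+1)/4. -/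
/-!
Reduction mod `p` is additive and multiplicative, so the preimage of a code closed under addition
and `R`-scaling is an `O_K`-module containing `p O_K^n`. For the theta series: writing
`4 Q_d(a, b) = (2a + b)² + (4d - 1) b²`, any `u` with some `bᵢ ≠ 0` has norm at least `d`.
Hence the vectors of norm `k < d` have all `bᵢ = 0`, and on those the norm `Σ aᵢ²` does not
depend on `d`; the same vectors are counted for `d' > d`.
-/

/-- Multiplication on `(ZMod p)²`, viewing `(a, b)` as `a - b·ω` in `O_K/pO_K`,
where `ω² + ω + d = 0`. -/
def mulR (p : ℕ) (d : ℤ) (r x : ZMod p × ZMod p) : ZMod p × ZMod p :=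
  (r.1 * x.1 - r.2 * x.2 * (d : ZMod p), r.1 * x.2 + r.2 * x.1 - r.2 * x.2)

/-- Multiplication on `ℤ²`, viewing `(a, b)` as `a - b·ω ∈ O_K`, where `ω² + ω + d = 0`. -/
def mulOK (d : ℤ) (r x : ℤ × ℤ) : ℤ × ℤ :=
  (r.1 * x.1 - r.2 * x.2 * d, r.1 * x.2 + r.2 * x.1 - r.2 * x.2)

/-- Componentwise reduction `O_K → O_K/pO_K` in the coordinates `a - b·ω ↦ (a, b)`. -/
def redP (p : ℕ) (x : ℤ × ℤ) : ZMod p × ZMod p := (((x.1 : ZMod p)), ((x.2 : ZMod p)))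

/-- Construction A: the preimage lattice `Λ_ℓ(C) ⊆ O_K^n` of a code `C ⊆ R^n`. -/
def latticeOf (p : ℕ) {n : ℕ} (C : Set (Fin n → ZMod p × ZMod p)) :
    Set (Fin n → ℤ × ℤ) :=
  {u | (fun i => redP p (u i)) ∈ C}

/-- The norm `u·ū = Σᵢ Q_d(aᵢ, bᵢ)` of `u ∈ O_K^n`, where `uᵢ = aᵢ - bᵢ·ω`
and `d = (ℓ+1)/4`. -/
def normOf (d : ℤ) {n : ℕ} (u : Fin n → ℤ × ℤ) : ℤ :=
  ∑ i, ((u i).1 ^ 2 + (u i).1 * (u i).2 + d * (u i).2 ^ 2)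

section Reduction

variable {p : ℕ}

theorem redP_natCast_mul (x : ℤ × ℤ) : redP p ((p : ℤ) * x.1, (p : ℤ) * x.2) = 0 := by
  simp [redP, Prod.ext_iff]

theorem redP_add (x y : ℤ × ℤ) : redP p (x + y) = redP p x + redP p y := by
  simp [redP]

theorem redP_mulOK (d : ℤ) (r x : ℤ × ℤ) :
    redP p (mulOK d r x) = mulR p d (redP p r) (redP p x) := by
  simp [redP, mulR, mulOK]

end Reduction

section Lattice

variable {p n : ℕ} {C : Set (Fin n → ZMod p × ZMod p)}

theorem natCast_mul_mem_latticeOf (hC0 : 0 ∈ C) (u : Fin n → ℤ × ℤ) :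
    (fun i => ((p : ℤ) * (u i).1, (p : ℤ) * (u i).2)) ∈ latticeOf p C := by
  show (fun i => redP p _) ∈ C
  simp only [redP_natCast_mul]
  exact hC0

theorem add_mem_latticeOf (hCadd : ∀ x y, x ∈ C → y ∈ C → x + y ∈ C)
    {u v : Fin n → ℤ × ℤ} (hu : u ∈ latticeOf p C) (hv : v ∈ latticeOf p C) :
    u + v ∈ latticeOf p C := by
  show (fun i => redP p (u i + v i)) ∈ C
  simp only [redP_add]
  exact hCadd _ _ hu hv

theorem mulOK_mem_latticeOf {d : ℤ}
    (hCsmul : ∀ r : ZMod p × ZMod p, ∀ x ∈ C, (fun i => mulR p d r (x i)) ∈ C)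
    (r : ℤ × ℤ) {u : Fin n → ℤ × ℤ} (hu : u ∈ latticeOf p C) :
    (fun i => mulOK d r (u i)) ∈ latticeOf p C := by
  show (fun i => redP p _) ∈ C
  simpa only [redP_mulOK] using hCsmul (redP p r) _ hu

end Lattice

section Norm

variable {e : ℤ}

theorem quadForm_nonneg (he : 1 ≤ e) (a b : ℤ) : 0 ≤ a ^ 2 + a * b + e * b ^ 2 := by
  nlinarith [sq_nonneg (2 * a + b), sq_nonneg b]

theorem le_quadForm_of_ne_zero (he : 1 ≤ e) (a : ℤ) {b : ℤ} (hb : b ≠ 0) :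
    e ≤ a ^ 2 + a * b + e * b ^ 2 := by
  have hb2 : 1 ≤ b ^ 2 := by
    rcases lt_or_gt_of_ne hb with h | h <;> nlinarith
  nlinarith [sq_nonneg (2 * a + b)]

variable {n : ℕ} {u : Fin n → ℤ × ℤ}

theorem snd_eq_zero_of_normOf_lt (he : 1 ≤ e) (hu : normOf e u < e) (i : Fin n) :
    (u i).2 = 0 := by
  by_contra hb
  have hterm := le_quadForm_of_ne_zero he (u i).1 hb
  have hle : (u i).1 ^ 2 + (u i).1 * (u i).2 + e * (u i).2 ^ 2 ≤ normOf e u :=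
    Finset.single_le_sum (f := fun i => (u i).1 ^ 2 + (u i).1 * (u i).2 + e * (u i).2 ^ 2)
      (fun j _ => quadForm_nonneg he _ _) (Finset.mem_univ i)
  omega

theorem normOf_eq_of_snd_eq_zero (hu : ∀ i, (u i).2 = 0) (e' : ℤ) :
    normOf e u = normOf e' u :=
  Finset.sum_congr rfl fun i _ => by rw [hu i]; ring

theorem normOf_eq_iff_of_lt {e' k : ℤ} (he : 1 ≤ e) (hee' : e ≤ e') (hk : k < e) :
    normOf e u = k ↔ normOf e' u = k := by
  constructor
  · intro h
    rw [← normOf_eq_of_snd_eq_zero (snd_eq_zero_of_normOf_lt he (h ▸ hk))]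
    exact h
  · intro h
    rw [normOf_eq_of_snd_eq_zero
      (snd_eq_zero_of_normOf_lt (he.trans hee') (h ▸ hk.trans_le hee')) e']
    exact h

end Norm

theorem stmt_17_general (p : ℕ) (n : ℕ)
    (C : Set (Fin n → ZMod p × ZMod p))
    (hC0 : 0 ∈ C)
    (hCadd : ∀ x y, x ∈ C → y ∈ C → x + y ∈ C)
    (l l' d d' : ℤ) (hl0 : 0 < l)
    (hd : 4 * d = l + 1) (hd' : 4 * d' = l' + 1) (hll : l < l')
    (hCsmul : ∀ r : ZMod p × ZMod p, ∀ x ∈ C, (fun i => mulR p d r (x i)) ∈ C) :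
    -- Λ_ℓ(C) contains (pO_K)^n
    (∀ u : Fin n → ℤ × ℤ,
        (fun i => ((p : ℤ) * (u i).1, (p : ℤ) * (u i).2)) ∈ latticeOf p C) ∧
    -- Λ_ℓ(C) is closed under addition
    (∀ u v, u ∈ latticeOf p C → v ∈ latticeOf p C → u + v ∈ latticeOf p C) ∧
    -- Λ_ℓ(C) is closed under scalar multiplication by O_K
    (∀ r : ℤ × ℤ, ∀ u ∈ latticeOf p C, (fun i => mulOK d r (u i)) ∈ latticeOf p C) ∧
    -- the theta coefficients of Λ_ℓ(C) and Λ_ℓ'(C) agree below (ℓ+1)/4 = d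
    (∀ k : ℤ, k < d →
      Nat.card {u : Fin n → ℤ × ℤ // u ∈ latticeOf p C ∧ normOf d u = k} =
        Nat.card {u : Fin n → ℤ × ℤ // u ∈ latticeOf p C ∧ normOf d' u = k}) := by
  have hd1 : 1 ≤ d := by omega
  have hdd' : d ≤ d' := by omega
  refine ⟨natCast_mul_mem_latticeOf hC0, fun _ _ => add_mem_latticeOf hCadd,
    fun r _ => mulOK_mem_latticeOf hCsmul r, fun k hk => ?_⟩
  exact Nat.card_congr <| Equiv.subtypeEquivRight fun _ =>
    and_congr_right fun _ => normOf_eq_iff_of_lt hd1 hdd' hk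

theorem stmt_17 (p : ℕ) (hp : p.Prime) (hodd : Odd p) (n : ℕ)
    (C : Set (Fin n → ZMod p × ZMod p))
    (hC0 : 0 ∈ C)
    (hCadd : ∀ x y, x ∈ C → y ∈ C → x + y ∈ C)
    (l l' d d' : ℤ) (hl0 : 0 < l) (hl0' : 0 < l')
    (hsf : Squarefree l) (hsf' : Squarefree l')
    (hmod : l % 4 = 3) (hmod' : l' % 4 = 3)
    (hpl : ¬ (p : ℤ) ∣ l) (hpl' : ¬ (p : ℤ) ∣ l')
    (hd : 4 * d = l + 1) (hd' : 4 * d' = l' + 1) (hll : l < l')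
    (hCsmul : ∀ r : ZMod p × ZMod p, ∀ x ∈ C, (fun i => mulR p d r (x i)) ∈ C) :
    -- Λ_ℓ(C) contains (pO_K)^n
    (∀ u : Fin n → ℤ × ℤ,
        (fun i => ((p : ℤ) * (u i).1, (p : ℤ) * (u i).2)) ∈ latticeOf p C) ∧
    -- Λ_ℓ(C) is closed under addition
    (∀ u v, u ∈ latticeOf p C → v ∈ latticeOf p C → u + v ∈ latticeOf p C) ∧
    -- Λ_ℓ(C) is closed under scalar multiplication by O_K
    (∀ r : ℤ × ℤ, ∀ u ∈ latticeOf p C, (fun i => mulOK d r (u i)) ∈ latticeOf p C) ∧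
    -- the theta coefficients of Λ_ℓ(C) and Λ_ℓ'(C) agree below (ℓ+1)/4 = d
    (∀ k : ℤ, k < d →
      Nat.card {u : Fin n → ℤ × ℤ // u ∈ latticeOf p C ∧ normOf d u = k} =
        Nat.card {u : Fin n → ℤ × ℤ // u ∈ latticeOf p C ∧ normOf d' u = k}) :=
  stmt_17_general p n C hC0 hCadd l l' d d' hl0 hd hd' hll hCsmul
end
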